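/- Under the completely randomized 2² factorial design with N ≥ 2 and n_j ≥ 2 for every j, for each l ∈ {1,2,3} the classic Neymanian variance estimator over-estimates the true sampling variance on average by exactly E[ V̂_N(τ̂_l) ] − Var(τ̂_l) = S²(τ̄_l)/N, where V̂_N(τ̂_l) = (1/4) Σ_{j=1}^4 p̂_j (1 − p̂_j)/(n_j − 1), and the expectation and variance are over the uniform distribution on all treatment assignments with the prescribed group sizes n_1, n_2, n_3, n_4. -/

import Mathlib

/-!
The design is invariant under relabelling the units, so `P(W i = j) = n_j / N` and, for `i ≠ i'`,
`P(W i = j, W i' = k) = (n_j n_k - δ_jk n_j) / (N (N - 1))`. Linearity then gives Neyman's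
covariance of group means, `Cov(p̂_j, p̂_k) = (δ_jk / n_j - 1 / N) S_jk`, hence
`Var(Σ_j c_j p̂_j) = Σ_j c_j² S_j² / n_j - S²(τ) / N` for every contrast. For binary outcomes
`p̄_j (1 - p̄_j) = (N - 1) S_j² / N`, which makes `p̂_j (1 - p̂_j) / (n_j - 1)` unbiased for
`S_j² / n_j`; as `c_j² = 1 / 4`, the Neymanian estimator overshoots by exactly `S²(τ) / N`.
-/

open Finset

/-- Contrast vectors of the 2^2 design: rows are h_1, h_2, h_3. -/
def H : Fin 3 → Fin 4 → ℤ :=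
  ![![-1, -1, 1, 1], ![-1, 1, -1, 1], ![1, -1, -1, 1]]

/-- N_j : number of units with Y_i(z_j) = 1. -/
def cnt1 {N : ℕ} (Y : Fin N → Fin 4 → ℕ) (j : Fin 4) : ℕ :=
  (univ.filter fun i => Y i j = 1).card

/-- N_{jj'} : number of units with Y_i(z_j) = Y_i(z_{j'}) = 1. -/
def cnt2 {N : ℕ} (Y : Fin N → Fin 4 → ℕ) (j j' : Fin 4) : ℕ :=
  (univ.filter fun i => Y i j = 1 ∧ Y i j' = 1).card

/-- N_{j j' j''} : triple-intersection counts. -/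
def cnt3 {N : ℕ} (Y : Fin N → Fin 4 → ℕ) (j j' j'' : Fin 4) : ℕ :=
  (univ.filter fun i => Y i j = 1 ∧ Y i j' = 1 ∧ Y i j'' = 1).card

/-- N_{1234} : quadruple-intersection count. -/
def cnt4 {N : ℕ} (Y : Fin N → Fin 4 → ℕ) : ℕ :=
  (univ.filter fun i => Y i 0 = 1 ∧ Y i 1 = 1 ∧ Y i 2 = 1 ∧ Y i 3 = 1).card

/-- Individual factorial effect τ_{il} = (1/2) h_l' Y_i. -/
noncomputable def tauInd {N : ℕ} (Y : Fin N → Fin 4 → ℕ) (l : Fin 3) (i : Fin N) : ℝ :=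
  (1 / 2) * ∑ j, (H l j : ℝ) * (Y i j : ℝ)

/-- Population factorial effect τ̄_l = (1/2) h_l' p, with p_j = N_j / N. -/
noncomputable def taubar {N : ℕ} (Y : Fin N → Fin 4 → ℕ) (l : Fin 3) : ℝ :=
  (1 / 2) * ∑ j, (H l j : ℝ) * ((cnt1 Y j : ℝ) / N)

/-- Variance of the individual factorial effects
    S²(τ̄_l) = (1/(N-1)) Σ_i (τ_{il} - τ̄_l)². -/
noncomputable def S2 {N : ℕ} (Y : Fin N → Fin 4 → ℕ) (l : Fin 3) : ℝ :=
  (1 / ((N : ℝ) - 1)) * ∑ i, (tauInd Y l i - taubar Y l) ^ 2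

/-- J_{l+} = {j : h_{lj} = 1}. -/
def Jplus (l : Fin 3) : Finset (Fin 4) := univ.filter fun j => H l j = 1

/-- J_{l-} = {j : h_{lj} = -1}. -/
def Jminus (l : Fin 3) : Finset (Fin 4) := univ.filter fun j => H l j = -1

/-- All treatment assignments W : {1,…,N} → {1,2,3,4} with #W⁻¹(j) = n_j. -/
def assignments (N : ℕ) (n : Fin 4 → ℕ) : Finset (Fin N → Fin 4) :=
  univ.filter fun W => ∀ j, (univ.filter fun i => W i = j).card = n j

/-- Expectation over the uniform distribution on all assignments. -/
noncomputable def expec {N : ℕ} (n : Fin 4 → ℕ) (f : (Fin N → Fin 4) → ℝ) : ℝ :=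
  (∑ W ∈ assignments N n, f W) / (assignments N n).card

/-- p̂_j = (1/n_j) Σ_{i : W(i) = j} Y_i(z_j). -/
noncomputable def phat {N : ℕ} (Y : Fin N → Fin 4 → ℕ) (n : Fin 4 → ℕ)
    (W : Fin N → Fin 4) (j : Fin 4) : ℝ :=
  (∑ i ∈ univ.filter (fun i => W i = j), (Y i j : ℝ)) / n j

/-- Randomization-based estimator τ̂_l = (1/2) h_l' p̂. -/
noncomputable def tauhat {N : ℕ} (Y : Fin N → Fin 4 → ℕ) (n : Fin 4 → ℕ)
    (l : Fin 3) (W : Fin N → Fin 4) : ℝ :=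
  (1 / 2) * ∑ j, (H l j : ℝ) * phat Y n W j

open scoped BigOperators

lemma Finset.sum_sum_mul_of_diag_offDiag {ι R : Type*} [Fintype ι] [CommRing R]
    {P : ι → ι → R} {d c : R} (hd : ∀ a, P a a = d) (hc : ∀ a b, a ≠ b → P a b = c)
    (x y : ι → R) :
    ∑ a, ∑ b, P a b * (x a * y b)
      = d * ∑ a, x a * y a + c * ((∑ a, x a) * (∑ b, y b) - ∑ a, x a * y a) := by
  classical
  have hP : ∀ a b, P a b = c + if a = b then d - c else 0 := by
    intro a b
    by_cases hab : a = b
    · subst hab; simp [hd]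
    · simp [hc a b hab, hab]
  simp only [hP, add_mul, ite_mul, zero_mul, sum_add_distrib, sum_ite_eq, mem_univ, if_true,
    ← mul_sum, sum_mul_sum]
  ring

section Assignments

variable {N : ℕ} {n : Fin 4 → ℕ}

lemma expec_eq_expect (f : (Fin N → Fin 4) → ℝ) :
    expec n f = 𝔼 W ∈ assignments N n, f W :=
  (expect_eq_sum_div_card _ _).symm

lemma assignments_nonempty (hsum : ∑ j, n j = N) : (assignments N n).Nonempty := by
  subst hsum
  refine ⟨fun i => (finSigmaFinEquiv.symm i).1, mem_filter.mpr ⟨mem_univ _, fun j => ?_⟩⟩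
  rw [card_filter, Equiv.sum_comp finSigmaFinEquiv.symm (fun s => if s.1 = j then 1 else 0),
    Fintype.sum_sigma]
  simp [apply_ite]

lemma comp_perm_mem_assignments (σ : Equiv.Perm (Fin N)) {W : Fin N → Fin 4}
    (hW : W ∈ assignments N n) : W ∘ σ ∈ assignments N n := by
  simp only [assignments, mem_filter, mem_univ, true_and, card_filter] at hW ⊢
  intro j
  rw [← hW j]
  exact Equiv.sum_comp σ (fun i => if W i = j then 1 else 0)

lemma expect_assignments_comp_perm (σ : Equiv.Perm (Fin N)) (f : (Fin N → Fin 4) → ℝ) :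
    𝔼 W ∈ assignments N n, f (W ∘ σ) = 𝔼 W ∈ assignments N n, f W :=
  expect_nbij' (· ∘ σ) (· ∘ σ.symm) (fun _ => comp_perm_mem_assignments σ)
    (fun _ => comp_perm_mem_assignments σ.symm) (fun W _ => by ext; simp)
    (fun W _ => by ext; simp) (fun _ _ => rfl)

lemma card_filter_apply_eq_of_mem_assignments {W : Fin N → Fin 4} (hW : W ∈ assignments N n)
    (j : Fin 4) : #{i | W i = j} = n j :=
  (mem_filter.mp hW).2 j

lemma expect_indicator_apply_eq (hsum : ∑ j, n j = N) (i : Fin N) (j : Fin 4) :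
    𝔼 W ∈ assignments N n, (if W i = j then (1 : ℝ) else 0) = n j / N := by
  have hconst : ∀ i', 𝔼 W ∈ assignments N n, (if W i' = j then (1 : ℝ) else 0)
      = 𝔼 W ∈ assignments N n, (if W i = j then (1 : ℝ) else 0) := fun i' => by
    simpa using expect_assignments_comp_perm (n := n) (Equiv.swap i i')
      (fun W => if W i = j then (1 : ℝ) else 0)
  have htotal : ∑ i', 𝔼 W ∈ assignments N n, (if W i' = j then (1 : ℝ) else 0) = n j := by
    rw [← expect_sum_comm]
    calc 𝔼 W ∈ assignments N n, ∑ i', (if W i' = j then (1 : ℝ) else 0)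
        = 𝔼 W ∈ assignments N n, (n j : ℝ) := expect_congr rfl fun W hW => by
          rw [sum_boole, card_filter_apply_eq_of_mem_assignments hW]
      _ = n j := expect_const (assignments_nonempty hsum) _
  rw [sum_congr rfl fun i' _ => hconst i', sum_const, card_univ, Fintype.card_fin,
    nsmul_eq_mul] at htotal
  have hN : (N : ℝ) ≠ 0 := by exact_mod_cast (Fin.pos i).ne'
  rw [← htotal, mul_div_cancel_left₀ _ hN]

lemma expect_indicator_mul_indicator_self (hsum : ∑ j, n j = N) (i : Fin N) (j k : Fin 4) :
    𝔼 W ∈ assignments N n, (if W i = j then (1 : ℝ) else 0) * (if W i = k then 1 else 0)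
      = if j = k then (n j : ℝ) / N else 0 := by
  split_ifs with hjk
  · subst hjk
    rw [← expect_indicator_apply_eq hsum i j]
    exact expect_congr rfl fun W _ => by split_ifs <;> simp
  · exact expect_eq_zero fun W _ => by split_ifs <;> simp_all

lemma expect_indicator_mul_indicator (hsum : ∑ j, n j = N) {i i' : Fin N} (hii' : i ≠ i')
    (j k : Fin 4) :
    𝔼 W ∈ assignments N n, (if W i = j then (1 : ℝ) else 0) * (if W i' = k then 1 else 0)
      = (n j * n k - if j = k then (n j : ℝ) else 0) / (N * (N - 1)) := by
  set P : Fin N → Fin N → ℝ := fun a b =>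
    𝔼 W ∈ assignments N n, (if W a = j then (1 : ℝ) else 0) * (if W b = k then 1 else 0)
  have hdiag : ∀ a, P a a = if j = k then (n j : ℝ) / N else 0 :=
    fun a => expect_indicator_mul_indicator_self hsum a j k
  have hoff : ∀ a b, a ≠ b → P a b = P i i' := by
    intro a b hab
    obtain ⟨σ, hσi, hσi'⟩ := MulAction.is_two_pretransitive_iff.mp
      (Equiv.Perm.isMultiplyPretransitive (Fin N) 2) hii' hab
    rw [Equiv.Perm.smul_def] at hσi hσi'
    simpa [P, hσi, hσi'] using expect_assignments_comp_perm (n := n) σ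
      (fun W => (if W i = j then (1 : ℝ) else 0) * (if W i' = k then 1 else 0))
  have htotal : ∑ a, ∑ b, P a b * (1 * 1) = n j * n k := by
    simp only [P, mul_one, ← expect_sum_comm]
    calc 𝔼 W ∈ assignments N n, ∑ a, ∑ b,
          (if W a = j then (1 : ℝ) else 0) * (if W b = k then 1 else 0)
        = 𝔼 W ∈ assignments N n, ((n j : ℝ) * n k) := expect_congr rfl fun W hW => by
          rw [← sum_mul_sum, sum_boole, sum_boole, card_filter_apply_eq_of_mem_assignments hW,
            card_filter_apply_eq_of_mem_assignments hW]
      _ = n j * n k := expect_const (assignments_nonempty hsum) _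
  rw [sum_sum_mul_of_diag_offDiag hdiag hoff] at htotal
  have hN : 1 < N := Fintype.one_lt_card_iff.mpr ⟨i, i', hii'⟩ |>.trans_eq (Fintype.card_fin N)
  have hN0 : (N : ℝ) ≠ 0 := by positivity
  have hN1 : (N : ℝ) - 1 ≠ 0 := sub_ne_zero.mpr (by exact_mod_cast hN.ne')
  simp only [mul_one, sum_const, card_univ, Fintype.card_fin, nsmul_eq_mul] at htotal
  change P i i' = _
  rw [eq_div_iff (mul_ne_zero hN0 hN1), ← htotal]
  split_ifs <;> field_simp <;> ring

end Assignments

noncomputable def popCov {ι : Type*} [Fintype ι] (x y : ι → ℝ) : ℝ :=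
  (∑ i, (x i - 𝔼 i', x i') * (y i - 𝔼 i', y i')) / (Fintype.card ι - 1)

section PopCov

variable {ι : Type*} [Fintype ι]

lemma popCov_eq (x y : ι → ℝ) :
    popCov x y
      = (∑ i, x i * y i - Fintype.card ι * (𝔼 i, x i) * 𝔼 i, y i) / (Fintype.card ι - 1) := by
  have hx := Fintype.card_mul_expect x
  have hy := Fintype.card_mul_expect y
  rw [popCov]
  congr 1
  simp only [sub_mul, mul_sub, sum_sub_distrib, ← sum_mul, ← mul_sum, sum_const, card_univ,
    nsmul_eq_mul, ← hx, ← hy]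
  ring

lemma popCov_sum_mul_sum {κ : Type*} [Fintype κ] (c d : κ → ℝ) (x y : κ → ι → ℝ) :
    popCov (fun i => ∑ j, c j * x j i) (fun i => ∑ k, d k * y k i)
      = ∑ j, ∑ k, c j * d k * popCov (x j) (y k) := by
  have hmean : ∀ (c : κ → ℝ) (x : κ → ι → ℝ),
      𝔼 i, ∑ j, c j * x j i = ∑ j, c j * 𝔼 i, x j i := fun c x => by
    rw [expect_sum_comm]
    simp only [mul_expect]
  simp only [popCov, hmean, ← sum_sub_distrib, ← mul_sub, sum_mul_sum]
  rw [sum_comm, sum_div]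
  refine sum_congr rfl fun j _ => ?_
  rw [sum_comm, sum_div]
  refine sum_congr rfl fun k _ => ?_
  rw [mul_div_assoc', mul_sum]
  congr 1
  refine sum_congr rfl fun i _ => ?_
  ring

lemma popCov_self_of_idempotent {x : ι → ℝ} (hx : ∀ i, x i * x i = x i) :
    popCov x x = Fintype.card ι * (𝔼 i, x i) * (1 - 𝔼 i, x i) / (Fintype.card ι - 1) := by
  rw [popCov_eq, sum_congr rfl fun i _ => hx i, ← Fintype.card_mul_expect]
  ring

end PopCov

noncomputable def groupMean {N : ℕ} (n : Fin 4 → ℕ) (W : Fin N → Fin 4) (j : Fin 4)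
    (x : Fin N → ℝ) : ℝ :=
  (∑ i ∈ univ.filter (fun i => W i = j), x i) / n j

section Moments

variable {N : ℕ} {n : Fin 4 → ℕ}

lemma groupMean_eq_sum_indicator (W : Fin N → Fin 4) (j : Fin 4) (x : Fin N → ℝ) :
    groupMean n W j x = (∑ i, (if W i = j then 1 else 0) * x i) / n j := by
  simp only [groupMean, sum_filter, boole_mul]

lemma expect_groupMean (hsum : ∑ j, n j = N) {j : Fin 4} (hj : n j ≠ 0) (x : Fin N → ℝ) :
    𝔼 W ∈ assignments N n, groupMean n W j x = 𝔼 i, x i := by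
  simp only [groupMean_eq_sum_indicator, ← expect_div, expect_sum_comm, ← expect_mul,
    expect_indicator_apply_eq hsum, Fintype.expect_eq_sum_div_card, Fintype.card_fin]
  rw [← mul_sum]
  field_simp

lemma expect_groupMean_mul_groupMean (hsum : ∑ j, n j = N) (hN : 1 < N) {j k : Fin 4}
    (hj : n j ≠ 0) (hk : n k ≠ 0) (x y : Fin N → ℝ) :
    𝔼 W ∈ assignments N n, groupMean n W j x * groupMean n W k y
      = (𝔼 i, x i) * (𝔼 i, y i)
        + ((if j = k then (n j : ℝ)⁻¹ else 0) - (N : ℝ)⁻¹) * popCov x y := by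
  have hprod : ∀ W : Fin N → Fin 4, groupMean n W j x * groupMean n W k y
      = (∑ a, ∑ b, ((if W a = j then (1 : ℝ) else 0) * (if W b = k then 1 else 0))
          * (x a * y b)) / (n j * n k) := by
    intro W
    rw [groupMean_eq_sum_indicator, groupMean_eq_sum_indicator, div_mul_div_comm, sum_mul_sum]
    congr 1
    exact sum_congr rfl fun a _ => sum_congr rfl fun b _ => by ring
  simp only [hprod, ← expect_div, expect_sum_comm, ← expect_mul]
  rw [sum_sum_mul_of_diag_offDiag (expect_indicator_mul_indicator_self hsum · j k)
    (fun a b hab => expect_indicator_mul_indicator hsum hab j k), popCov_eq, Fintype.card_fin,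
    ← Fintype.card_mul_expect x, ← Fintype.card_mul_expect y, Fintype.card_fin]
  have hN1 : (N : ℝ) - 1 ≠ 0 := sub_ne_zero.mpr (by exact_mod_cast hN.ne')
  have hN0 : (N : ℝ) ≠ 0 := by positivity
  split_ifs with hjk
  · subst hjk; field_simp; ring
  · field_simp; ring

lemma expect_groupMean_sub_mul_groupMean_sub (hsum : ∑ j, n j = N) (hN : 1 < N) {j k : Fin 4}
    (hj : n j ≠ 0) (hk : n k ≠ 0) (x y : Fin N → ℝ) :
    𝔼 W ∈ assignments N n, (groupMean n W j x - 𝔼 i, x i) * (groupMean n W k y - 𝔼 i, y i)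
      = ((if j = k then (n j : ℝ)⁻¹ else 0) - (N : ℝ)⁻¹) * popCov x y := by
  have hexpand : ∀ W : Fin N → Fin 4,
      (groupMean n W j x - 𝔼 i, x i) * (groupMean n W k y - 𝔼 i, y i)
        = groupMean n W j x * groupMean n W k y
          - ((𝔼 i, x i) * groupMean n W k y + (𝔼 i, y i) * groupMean n W j x)
          + (𝔼 i, x i) * (𝔼 i, y i) := fun W => by ring
  simp only [hexpand, expect_add_distrib, expect_sub_distrib, ← mul_expect,
    expect_groupMean hsum hj, expect_groupMean hsum hk,
    expect_groupMean_mul_groupMean hsum hN hj hk, expect_const (assignments_nonempty hsum)]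
  ring

lemma expect_groupMean_mul_one_sub_div (hsum : ∑ j, n j = N) (hN : 1 < N) {j : Fin 4}
    (hj : 2 ≤ n j) {x : Fin N → ℝ} (hx : ∀ i, x i * x i = x i) :
    𝔼 W ∈ assignments N n, groupMean n W j x * (1 - groupMean n W j x) / (n j - 1)
      = popCov x x / n j := by
  have hj0 : n j ≠ 0 := by omega
  have hj1 : (n j : ℝ) - 1 ≠ 0 := sub_ne_zero.mpr (by exact_mod_cast (by omega : n j ≠ 1))
  have hN1 : (N : ℝ) - 1 ≠ 0 := sub_ne_zero.mpr (by exact_mod_cast hN.ne')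
  have hN0 : (N : ℝ) ≠ 0 := by positivity
  simp only [mul_one_sub, ← expect_div, expect_sub_distrib, expect_groupMean hsum hj0,
    expect_groupMean_mul_groupMean hsum hN hj0 hj0, if_true]
  rw [popCov_self_of_idempotent hx, Fintype.card_fin]
  field_simp
  ring

lemma expect_contrast_sub_sq (hsum : ∑ j, n j = N) (hN : 1 < N) (hn : ∀ j, n j ≠ 0)
    (c : Fin 4 → ℝ) (x : Fin 4 → Fin N → ℝ) :
    𝔼 W ∈ assignments N n, (∑ j, c j * groupMean n W j (x j) - ∑ j, c j * 𝔼 i, x j i) ^ 2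
      = ∑ j, c j ^ 2 * popCov (x j) (x j) / n j
        - popCov (fun i => ∑ j, c j * x j i) (fun i => ∑ j, c j * x j i) / N := by
  have hexpand : ∀ W : Fin N → Fin 4,
      (∑ j, c j * groupMean n W j (x j) - ∑ j, c j * 𝔼 i, x j i) ^ 2
        = ∑ j, ∑ k, c j * c k
            * ((groupMean n W j (x j) - 𝔼 i, x j i) * (groupMean n W k (x k) - 𝔼 i, x k i)) :=
    fun W => by
      rw [← sum_sub_distrib, sq, sum_mul_sum]
      exact sum_congr rfl fun j _ => sum_congr rfl fun k _ => by ring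
  rw [expect_congr rfl fun W _ => hexpand W, expect_sum_comm]
  simp_rw [expect_sum_comm, ← mul_expect,
    expect_groupMean_sub_mul_groupMean_sub hsum hN (hn _) (hn _), popCov_sum_mul_sum, sum_div,
    ← sum_sub_distrib]
  refine sum_congr rfl fun j _ => ?_
  simp only [mul_sub, sub_mul, mul_ite, ite_mul, mul_zero, zero_mul, sum_sub_distrib,
    sum_ite_eq, mem_univ, if_true]
  congr 1
  · ring
  · exact sum_congr rfl fun k _ => by ring

end Moments

section Binary

variable {N : ℕ} {Y : Fin N → Fin 4 → ℕ}

lemma cnt1_eq_sum_of_le_one (hY : ∀ i j, Y i j ≤ 1) (j : Fin 4) : (cnt1 Y j : ℝ) = ∑ i, (Y i j : ℝ) := by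
  rw [cnt1, card_filter, Nat.cast_sum]
  refine sum_congr rfl fun i _ => ?_
  rcases Nat.le_one_iff_eq_zero_or_eq_one.mp (hY i j) with h | h <;> simp [h]

lemma S2_eq_popCov (hY : ∀ i j, Y i j ≤ 1) (l : Fin 3) :
    S2 Y l = popCov (tauInd Y l) (tauInd Y l) := by
  have hmean : taubar Y l = 𝔼 i, tauInd Y l i := by
    simp only [taubar, tauInd, Fintype.expect_eq_sum_div_card, Fintype.card_fin, cnt1_eq_sum_of_le_one hY,
      ← mul_sum, sum_comm (γ := Fin N), mul_div_assoc, sum_div]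
  rw [S2, popCov, Fintype.card_fin, ← hmean, one_div_mul_eq_div]
  simp only [sq]

end Binary

theorem stmt16 (N : ℕ) (hN : 2 ≤ N) (n : Fin 4 → ℕ) (hn : ∀ j, 2 ≤ n j)
    (hsum : ∑ j, n j = N) (l : Fin 3)
    (Y : Fin N → Fin 4 → ℕ) (hY : ∀ i j, Y i j ≤ 1) :
    expec n (fun W => (1 / 4) * ∑ j, phat Y n W j * (1 - phat Y n W j) / ((n j : ℝ) - 1))
      - expec n (fun W => (tauhat Y n l W - expec n (tauhat Y n l)) ^ 2)
      = S2 Y l / N := by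
  set x : Fin 4 → Fin N → ℝ := fun j i => Y i j
  set c : Fin 4 → ℝ := fun j => H l j / 2
  have hn0 : ∀ j, n j ≠ 0 := fun j => by have := hn j; omega
  have hx : ∀ j i, x j i * x j i = x j i := fun j i => by
    rcases Nat.le_one_iff_eq_zero_or_eq_one.mp (hY i j) with h | h <;> simp [x, h]
  have hc : ∀ j, c j ^ 2 = 1 / 4 := by
    intro j; fin_cases l <;> fin_cases j <;> norm_num [c, H]
  have hphat : ∀ W j, phat Y n W j = groupMean n W j (x j) := fun _ _ => rfl
  have htauhat : ∀ W, tauhat Y n l W = ∑ j, c j * groupMean n W j (x j) := fun W => by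
    simp only [tauhat, hphat, mul_sum, c]
    exact sum_congr rfl fun j _ => by ring
  have htauInd : tauInd Y l = fun i => ∑ j, c j * x j i := funext fun i => by
    simp only [tauInd, mul_sum, c, x]
    exact sum_congr rfl fun j _ => by ring
  simp only [expec_eq_expect, hphat, htauhat, ← mul_expect, expect_sum_comm,
    expect_groupMean hsum (hn0 _), expect_groupMean_mul_one_sub_div hsum hN (hn _) (hx _)]
  rw [expect_contrast_sub_sq hsum hN hn0, S2_eq_popCov hY, htauInd]
  simp only [hc, mul_div_assoc, ← mul_sum]
  ring
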